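/- There is an absolute constant C such that the following holds. Let (T',T'') be a pair of SLPs over the alphabet {a,f} of total size m such that the symbol a occurs in str(T''), and let s = str(T')·str(T'')^ω. Then there exists a pair (P',P'') of SLPs over {0,1} of total size at most C·m with str(P')·str(P'')^ω = h(s), where h is the composition h3∘h2∘h1 applied to s: h1 replaces every occurrence of the factor af by the single symbol 1 (these occurrences in a word over {a,f} are pairwise disjoint, so this is well defined), h2 then replaces every remaining a by 0, and h3 erases every remaining f. -/

import Mathlib

/-- The auxiliary alphabet `{a, f}` used in transcripts of computations. -/
inductive AF
  | a
  | f
deriving DecidableEq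

/-- A straight-line program in Chomsky normal form over alphabet `α`:
nonterminals are `Fin n`, each production is either a terminal or a pair of
nonterminals with strictly smaller indices (this index condition is a
topological ordering witnessing acyclicity of the SLP).  The size of such an
SLP is its number `n` of nonterminals. -/
structure CnfSLP (α : Type) where
  n : ℕ
  ax : Fin n
  prod : Fin n → α ⊕ (Fin n × Fin n)
  wf : ∀ (i B C : Fin n), prod i = Sum.inr (B, C) → B < i ∧ C < i

namespace CnfSLP

variable {α : Type}

/-- The word generated by nonterminal `i`. -/
def strAt (P : CnfSLP α) : Fin P.n → List α
  | i =>
    match h : P.prod i with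
    | Sum.inl a => [a]
    | Sum.inr (B, C) => P.strAt B ++ P.strAt C
termination_by i => i.val
decreasing_by
  · exact (P.wf i B C h).1
  · exact (P.wf i B C h).2

/-- The word generated by the SLP (from its axiom). -/
def str (P : CnfSLP α) : List α := P.strAt P.ax

/-- The size of an SLP: the number of nonterminals (in Chomsky normal form). -/
def size (P : CnfSLP α) : ℕ := P.n

end CnfSLP

/-- `Generates u w c` means the infinite sequence `u · w^ω` is well defined
(`w` is nonempty) and equals the sequence `c`. -/
def Generates {α : Type} (u w : List α) (c : ℕ → α) : Prop :=
  w ≠ [] ∧ ∀ i : ℕ,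
    (if i < u.length then u[i]? else w[(i - u.length) % w.length]?) = some (c i)

/-!
The map `h` can be computed letter by letter with one letter of lookahead: an `a` yields the
bit "the next letter is `f`", an `f` yields nothing. So for an SLP `P` over `{a, f}` we give every
nonterminal `i` two copies `(i, a)` and `(i, f)`, the copy `(i, c)` deriving the image of
`strAt i` followed by the letter `c`. A production `i → B C` becomes `(i, c) → (B, c') (C, c)`
with `c'` the first letter of `strAt C`; a child without an `a` has empty image and is skipped.
This doubles the size. With `c` the first letter of `str T2`, the image of
`str T1 · (str T2)^ω` is then `h(str T1 · c) · h(str T2 · c)^ω`, and when `str T1` has no `a`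
the empty first factor is replaced by a copy of the period.
-/

theorem Nat.eq_nth_of_strictMono {p : ℕ → Prop} {f : ℕ → ℕ} (hf : StrictMono f)
    (hmem : ∀ i, p (f i)) (hsurj : ∀ n, p n → ∃ i, f i = n) : f = Nat.nth p := by
  have hinf : (Set.ofPred p).Infinite := Set.infinite_of_injective_forall_mem hf.injective hmem
  funext n
  refine Nat.eq_nth_of_strictMonoOn_of_mapsTo_of_surjOn f ?_ (fun i _ => hmem i)
    (hf.strictMonoOn _) fun hfin => absurd hfin hinf
  intro m hm
  obtain ⟨i, rfl⟩ := hsurj m hm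
  exact ⟨i, fun hfin => absurd hfin hinf, rfl⟩

namespace List

variable {α : Type*}

theorem length_flatten_replicate (w : List α) (k : ℕ) :
    (replicate k w).flatten.length = k * w.length := by
  simp

theorem getElem?_flatten_replicate (w : List α) {k j : ℕ} (hj : j < k * w.length) :
    (replicate k w).flatten[j]? = w[j % w.length]? := by
  induction k generalizing j with
  | zero => omega
  | succ k ih =>
    rw [replicate_succ, flatten_cons]
    by_cases h : j < w.length
    · rw [getElem?_append_left h, Nat.mod_eq_of_lt h]
    · rw [getElem?_append_right (by omega), ih (by rw [Nat.succ_mul] at hj; omega),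
        ← Nat.mod_eq_sub_mod (by omega)]

theorem headD_flatten_replicate_cons (x : α) (xs : List α) (k : ℕ) :
    (replicate k (x :: xs)).flatten.headD x = x := by
  cases k <;> rfl

end List

section Generates

variable {α : Type}

theorem generates_iff {u w : List α} {c : ℕ → α} :
    Generates u w c ↔ w ≠ [] ∧ ∀ k : ℕ,
      (List.range (u.length + k * w.length)).map c = u ++ (List.replicate k w).flatten := by
  have hidx : ∀ k i, i < u.length + k * w.length →
      (u ++ (List.replicate k w).flatten)[i]? =
        if i < u.length then u[i]? else w[(i - u.length) % w.length]? := by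
    intro k i hi
    split_ifs with hu
    · exact List.getElem?_append_left hu
    · rw [List.getElem?_append_right (by omega), List.getElem?_flatten_replicate w (by omega)]
  refine ⟨fun ⟨hw, hc⟩ => ⟨hw, fun k => List.ext_getElem? fun i => ?_⟩,
    fun ⟨hw, hc⟩ => ⟨hw, fun i => ?_⟩⟩
  · by_cases hi : i < u.length + k * w.length
    · rw [hidx k i hi, hc i, List.getElem?_map, List.getElem?_range hi, Option.map_some]
    · rw [List.getElem?_eq_none (by simpa using hi),
        List.getElem?_eq_none (by simp only [List.length_append,
          List.length_flatten_replicate]; omega)]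
  · have hwl : 0 < w.length := List.length_pos_iff.mpr hw
    have hi : i < u.length + (i + 1) * w.length := by nlinarith
    rw [← hidx (i + 1) i hi, ← hc, List.getElem?_map, List.getElem?_range hi, Option.map_some]

theorem Generates.append_period {u w : List α} {c : ℕ → α} (h : Generates u w c) :
    Generates (u ++ w) w c := by
  rw [generates_iff] at h ⊢
  refine ⟨h.1, fun k => ?_⟩
  rw [List.length_append, add_assoc, add_comm w.length, ← Nat.succ_mul, h.2, List.replicate_succ,
    List.flatten_cons, List.append_assoc]

end Generates

/-- The image under `h` of the word `x` when it is followed by the letter `c`. -/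
def indicatorWord : List AF → AF → List Bool
  | [], _ => []
  | AF.a :: t, c => decide (t.headD c = AF.f) :: indicatorWord t c
  | AF.f :: t, c => indicatorWord t c

theorem length_indicatorWord (x : List AF) (c : AF) :
    (indicatorWord x c).length = x.count AF.a := by
  induction x with
  | nil => rfl
  | cons y t ih => cases y <;> simp [indicatorWord, ih]

theorem indicatorWord_eq_nil {x : List AF} (c : AF) (hx : AF.a ∉ x) : indicatorWord x c = [] :=
  List.eq_nil_of_length_eq_zero <| by
    rw [length_indicatorWord, List.count_eq_zero_of_not_mem hx]

theorem indicatorWord_ne_nil {x : List AF} (c : AF) (hx : AF.a ∈ x) : indicatorWord x c ≠ [] :=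
  List.ne_nil_of_length_pos <| by
    rw [length_indicatorWord]; exact List.count_pos_iff.mpr hx

theorem indicatorWord_append (x y : List AF) (c : AF) :
    indicatorWord (x ++ y) c = indicatorWord x (y.headD c) ++ indicatorWord y c := by
  induction x with
  | nil => rfl
  | cons z t ih =>
    cases z
    · simp only [List.cons_append, indicatorWord, ih]
      cases t <;> rfl
    · simp only [List.cons_append, indicatorWord, ih]

theorem indicatorWord_flatten_replicate (x : AF) (xs : List AF) (k : ℕ) :
    indicatorWord (List.replicate k (x :: xs)).flatten x =
      (List.replicate k (indicatorWord (x :: xs) x)).flatten := by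
  induction k with
  | zero => rfl
  | succ k ih =>
    rw [List.replicate_succ, List.flatten_cons, indicatorWord_append, ih, List.replicate_succ,
      List.flatten_cons, List.headD_flatten_replicate_cons]

theorem indicatorWord_map_range (s : ℕ → AF) (N : ℕ) :
    indicatorWord ((List.range N).map s) (s N) =
      (List.range (Nat.count (s · = AF.a) N)).map
        fun i => decide (s (Nat.nth (s · = AF.a) i + 1) = AF.f) := by
  induction N with
  | zero => rfl
  | succ N ih =>
    rw [List.range_succ, List.map_append, indicatorWord_append, List.map_singleton,
      List.headD_cons, ih, Nat.count_succ]
    rcases hsN : s N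
    · simp [List.range_succ, indicatorWord, Nat.nth_count (p := (s · = AF.a)) hsN]
    · simp [indicatorWord]

theorem generates_indicatorWord {u xs : List AF} {x : AF} {s : ℕ → AF}
    (hA : AF.a ∈ x :: xs) (hgen : Generates u (x :: xs) s) :
    Generates (indicatorWord u x) (indicatorWord (x :: xs) x)
      (fun i => decide (s (Nat.nth (s · = AF.a) i + 1) = AF.f)) := by
  set w := x :: xs
  refine generates_iff.mpr ⟨indicatorWord_ne_nil x hA, fun k => ?_⟩
  set N := u.length + k * w.length
  have hsN : s N = x := by
    have h := hgen.2 N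
    rw [if_neg (by omega), show N - u.length = k * w.length by omega, Nat.mul_mod_left] at h
    simpa [w, eq_comm] using h
  have hprefix : indicatorWord u x ++ (List.replicate k (indicatorWord w x)).flatten =
      (List.range (Nat.count (s · = AF.a) N)).map
        fun i => decide (s (Nat.nth (s · = AF.a) i + 1) = AF.f) := calc
    _ = indicatorWord (u ++ (List.replicate k w).flatten) x := by
      rw [indicatorWord_append, List.headD_flatten_replicate_cons, indicatorWord_flatten_replicate]
    _ = indicatorWord ((List.range N).map s) (s N) := by
      rw [(generates_iff.mp hgen).2 k, hsN]
    _ = _ := indicatorWord_map_range s N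
  have hlength := congrArg List.length hprefix
  simp only [List.length_append, List.length_flatten_replicate, List.length_map,
    List.length_range] at hlength
  rw [hprefix, hlength]

namespace CnfSLP

variable {α : Type}

theorem strAt_of_prod_inl (P : CnfSLP α) {i : Fin P.n} {b : α} (h : P.prod i = .inl b) :
    P.strAt i = [b] := by
  rw [strAt]; split <;> simp_all

theorem strAt_of_prod_inr (P : CnfSLP α) {i B C : Fin P.n} (h : P.prod i = .inr (B, C)) :
    P.strAt i = P.strAt B ++ P.strAt C := by
  rw [strAt]; split <;> simp_all

theorem strAt_eq_of_prod_eq (P : CnfSLP α) {i j : Fin P.n} (h : P.prod i = P.prod j) :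
    P.strAt i = P.strAt j := by
  rcases hj : P.prod j with b | ⟨B, C⟩
  · rw [strAt_of_prod_inl P (h.trans hj), strAt_of_prod_inl P hj]
  · rw [strAt_of_prod_inr P (h.trans hj), strAt_of_prod_inr P hj]

def pairIndex {n : ℕ} (i : Fin n) (c : AF) : Fin (2 * n) :=
  ⟨2 * i + if c = AF.f then 1 else 0, by split <;> omega⟩

/-- The production of the nonterminal `(i, c)`, meaningful when `a ∈ P.strAt i`. A child without
an `a` would leave a unit production, which is replaced by the production of the other child. -/
def indicatorProd (P : CnfSLP AF) (i : Fin P.n) (c : AF) :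
    Bool ⊕ (Fin (2 * P.n) × Fin (2 * P.n)) :=
  match h : P.prod i with
  | .inl .a => .inl (decide (c = .f))
  | .inl .f => .inl false
  | .inr (B, C) =>
    if AF.a ∈ P.strAt B then
      if AF.a ∈ P.strAt C then .inr (pairIndex B ((P.strAt C).headD c), pairIndex C c)
      else P.indicatorProd B ((P.strAt C).headD c)
    else P.indicatorProd C c
termination_by i
decreasing_by
  · exact (P.wf i B C h).1
  · exact (P.wf i B C h).2

theorem indicatorProd_lt (P : CnfSLP AF) (i : Fin P.n) (c : AF) {p q : Fin (2 * P.n)}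
    (h : P.indicatorProd i c = .inr (p, q)) : p < 2 * i.val ∧ q < 2 * i.val := by
  rw [indicatorProd] at h
  split at h
  · simp at h
  · simp at h
  · rename_i B C hBC
    have hB := (P.wf i B C hBC).1
    have hC := (P.wf i B C hBC).2
    split_ifs at h
    · simp only [Sum.inr.injEq, Prod.mk.injEq] at h
      obtain ⟨rfl, rfl⟩ := h
      simp only [pairIndex, Fin.lt_def] at hB hC ⊢
      constructor <;> split <;> omega
    · have := P.indicatorProd_lt B _ h
      rw [Fin.lt_def] at hB
      omega
    · have := P.indicatorProd_lt C _ h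
      rw [Fin.lt_def] at hC
      omega
termination_by i

def indicator (P : CnfSLP AF) (c : AF) : CnfSLP Bool where
  n := 2 * P.n
  ax := pairIndex P.ax c
  prod k := P.indicatorProd ⟨k / 2, by omega⟩ (if k.val % 2 = 1 then .f else .a)
  wf k B C h := by
    have := P.indicatorProd_lt _ _ h
    simp only [Fin.lt_def] at this ⊢
    omega

theorem indicator_prod_pairIndex (P : CnfSLP AF) (c : AF) (i : Fin P.n) (d : AF) :
    (P.indicator c).prod (pairIndex i d) = P.indicatorProd i d := by
  have hdiv : (2 * i.val + 1) / 2 = i.val := by omega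
  cases d <;> simp [indicator, pairIndex, hdiv]

theorem indicatorProd_of_prod_inl (P : CnfSLP AF) {i : Fin P.n} (h : P.prod i = .inl .a)
    (c : AF) : P.indicatorProd i c = .inl (decide (c = .f)) := by
  rw [indicatorProd]
  split <;> simp_all

theorem indicatorProd_of_prod_inr (P : CnfSLP AF) {i B C : Fin P.n}
    (h : P.prod i = .inr (B, C)) (c : AF) :
    P.indicatorProd i c =
      if AF.a ∈ P.strAt B then
        if AF.a ∈ P.strAt C then .inr (pairIndex B ((P.strAt C).headD c), pairIndex C c)
        else P.indicatorProd B ((P.strAt C).headD c)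
      else P.indicatorProd C c := by
  rw [indicatorProd]
  split <;> simp_all

theorem strAt_indicator_pairIndex (P : CnfSLP AF) (c : AF) (i : Fin P.n) (d : AF)
    (hA : AF.a ∈ P.strAt i) :
    (P.indicator c).strAt (pairIndex i d) = indicatorWord (P.strAt i) d := by
  have hprod := P.indicator_prod_pairIndex c i d
  rcases h : P.prod i with b | ⟨B, C⟩
  · rw [strAt_of_prod_inl P h] at hA ⊢
    obtain rfl : b = AF.a := (List.mem_singleton.mp hA).symm
    rw [strAt_of_prod_inl _ (hprod.trans (P.indicatorProd_of_prod_inl h d))]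
    rfl
  · rw [strAt_of_prod_inr P h, indicatorWord_append] at *
    have hskip : ∀ (j : Fin P.n) (e : AF), P.indicatorProd i d = P.indicatorProd j e →
        (P.indicator c).strAt (pairIndex i d) = (P.indicator c).strAt (pairIndex j e) :=
      fun j e hj => strAt_eq_of_prod_eq _ <| hprod.trans <| hj.trans
        (P.indicator_prod_pairIndex c j e).symm
    by_cases hB : AF.a ∈ P.strAt B
    · by_cases hC : AF.a ∈ P.strAt C
      · have hBC : P.indicatorProd i d =
            .inr (pairIndex B ((P.strAt C).headD d), pairIndex C d) := by
          rw [P.indicatorProd_of_prod_inr h, if_pos hB, if_pos hC]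
        rw [strAt_of_prod_inr _ (hprod.trans hBC), P.strAt_indicator_pairIndex c B _ hB,
          P.strAt_indicator_pairIndex c C _ hC]
      · rw [hskip B _ (by rw [P.indicatorProd_of_prod_inr h, if_pos hB, if_neg hC]),
          P.strAt_indicator_pairIndex c B _ hB, indicatorWord_eq_nil _ hC, List.append_nil]
    · rw [hskip C d (by rw [P.indicatorProd_of_prod_inr h, if_neg hB]),
        indicatorWord_eq_nil _ hB, P.strAt_indicator_pairIndex c C _ (by simpa [hB] using hA),
        List.nil_append]
termination_by i
decreasing_by
  all_goals first | exact (P.wf i B C h).1 | exact (P.wf i B C h).2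

theorem str_indicator (P : CnfSLP AF) (c : AF) (hA : AF.a ∈ P.str) :
    (P.indicator c).str = indicatorWord P.str c :=
  P.strAt_indicator_pairIndex c P.ax c hA

theorem size_indicator (P : CnfSLP AF) (c : AF) : (P.indicator c).size = 2 * P.size := rfl

end CnfSLP

-- The `i`-th letter of `h(s)` comes from the `i`-th `a` of `s`, at position `posa i`.
/-- There is an absolute constant `C` such that, for every
pair `(T1, T2)` of SLPs over `{a,f}` of total size `m` with `a` occurring in
`str(T2)`, letting `s = str(T1)·str(T2)^ω`, there is a pair `(P1, P2)` of
SLPs over `{0,1}` of total size at most `C·m` generating `h(s)`, where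
`h = h3 ∘ h2 ∘ h1` replaces every (necessarily disjoint) occurrence of the
factor `af` by `1`, every remaining `a` by `0`, and erases every remaining
`f`.  Equivalently (and this is how `h(s)` is phrased here): if
`posa : ℕ → ℕ` enumerates, in increasing order, exactly the positions of the
letter `a` in `s`, then `h(s)` is the sequence whose `i`-th entry is `1`
(`true`) iff the `a` at position `posa i` is immediately followed by `f`. -/
theorem transcript_pair_to_indicator_pair :
    ∃ C : ℕ, ∀ (T1 T2 : CnfSLP AF) (s : ℕ → AF) (posa : ℕ → ℕ),
      AF.a ∈ T2.str →
      Generates T1.str T2.str s →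
      StrictMono posa →
      (∀ i : ℕ, s (posa i) = AF.a) →
      (∀ n : ℕ, s n = AF.a → ∃ i, posa i = n) →
      ∃ P1 P2 : CnfSLP Bool,
        P1.size + P2.size ≤ C * (T1.size + T2.size) ∧
        Generates P1.str P2.str (fun i => decide (s (posa i + 1) = AF.f)) := by
  refine ⟨4, fun T1 T2 s posa hA hgen hmono hpos hsurj => ?_⟩
  obtain ⟨x, xs, hw⟩ := List.exists_cons_of_ne_nil hgen.1
  have hbits : Generates (indicatorWord T1.str x) (indicatorWord T2.str x)
      (fun i => decide (s (posa i + 1) = AF.f)) := by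
    rw [hw] at hA hgen
    rw [Nat.eq_nth_of_strictMono hmono hpos hsurj, hw]
    exact generates_indicatorWord hA hgen
  by_cases hA1 : AF.a ∈ T1.str
  · refine ⟨T1.indicator x, T2.indicator x, ?_, ?_⟩
    · simp only [CnfSLP.size_indicator]
      omega
    · rwa [CnfSLP.str_indicator _ _ hA1, CnfSLP.str_indicator _ _ hA]
  · refine ⟨T2.indicator x, T2.indicator x, ?_, ?_⟩
    · simp only [CnfSLP.size_indicator]
      omega
    · rw [CnfSLP.str_indicator _ _ hA]
      simpa only [indicatorWord_eq_nil x hA1, List.nil_append] using hbits.append_period
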